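/- arXiv:2011.12020 — 4 statements merged into one kernel-verified Lean document; each statement's English description precedes it below -/
import Mathlib

section
/- Let A be a C*-algebra and let φ be a weight on A that is lower semicontinuous, in the sense that for every net (a_j) of positive elements of A converging in norm to a positive element a one has φ(a) ≤ liminf_j φ(a_j). Let (e_i)_{i∈I} be an approximate identity for A indexed by a directed set I such that 0 ≤ e_i and ‖e_i‖ ≤ 1 for every i ∈ I, i.e. e_i·x → x in norm for every x ∈ A along the directed set I. Then for every positive a ∈ A one has φ(a) = sup_{i∈I} φ(a^{1/2} e_i a^{1/2}). -/
/-!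
A positive contraction satisfies `e ≤ 1`, so `a^{1/2} e a^{1/2} ≤ a`, and additivity makes a weight
monotone; this gives `≥`. Conversely `a^{1/2} e_i a^{1/2} → a^{1/2} a^{1/2} = a`, so lower
semicontinuity bounds `φ a` by the liminf of the terms, hence by their supremum.
-/

open scoped ENNReal
open Filter

universe u

theorem monotoneOn_of_map_add_of_nonneg {A : Type*} [AddCommGroup A] [PartialOrder A]
    [IsOrderedAddMonoid A] {φ : A → ℝ≥0∞}
    (hadd : ∀ a b : A, 0 ≤ a → 0 ≤ b → φ (a + b) = φ a + φ b) :
    MonotoneOn φ (Set.Ici 0) := by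
  intro x hx y _ hxy
  calc φ x ≤ φ x + φ (y - x) := le_self_add
    _ = φ y := by rw [← hadd x (y - x) hx (sub_nonneg.2 hxy), add_sub_cancel]

section CStarAlgebra

variable {A : Type*} [CStarAlgebra A] [PartialOrder A] [StarOrderedRing A]

theorem CFC.sqrt_mul_mul_sqrt_nonneg {b : A} (hb : 0 ≤ b) (a : A) :
    0 ≤ CFC.sqrt a * b * CFC.sqrt a :=
  conjugate_nonneg_of_nonneg hb (CFC.sqrt_nonneg a)

theorem CFC.sqrt_mul_mul_sqrt_le_self {a b : A} (ha : 0 ≤ a) (hb : 0 ≤ b) (hb1 : ‖b‖ ≤ 1) :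
    CFC.sqrt a * b * CFC.sqrt a ≤ a := by
  have hb_le_one : b ≤ 1 := (CStarAlgebra.norm_le_one_iff_of_nonneg b hb).1 hb1
  simpa [CFC.sqrt_mul_sqrt_self a ha] using
    conjugate_le_conjugate_of_nonneg hb_le_one (CFC.sqrt_nonneg a)

theorem CFC.tendsto_sqrt_mul_mul_sqrt {ι : Type*} {l : Filter ι} {e : ι → A}
    (he : ∀ x : A, Tendsto (fun i => e i * x) l (nhds x)) {a : A} (ha : 0 ≤ a) :
    Tendsto (fun i => CFC.sqrt a * e i * CFC.sqrt a) l (nhds a) := by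
  simpa only [mul_assoc, CFC.sqrt_mul_sqrt_self a ha] using
    (he (CFC.sqrt a)).const_mul (CFC.sqrt a)

end CStarAlgebra

theorem weight_eq_iSup_of_approximateIdentity_general
    {A : Type u} [CStarAlgebra A] [PartialOrder A] [StarOrderedRing A]
    (φ : A → ℝ≥0∞)
    (hadd : ∀ a b : A, 0 ≤ a → 0 ≤ b → φ (a + b) = φ a + φ b)
    (hlsc : ∀ {ι : Type u} [Preorder ι] [IsDirected ι (· ≤ ·)] [Nonempty ι]
      (s : ι → A) (a : A), (∀ j, 0 ≤ s j) → 0 ≤ a →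
      Tendsto s atTop (nhds a) → φ a ≤ liminf (fun j => φ (s j)) atTop)
    {I : Type u} [Preorder I] [IsDirected I (· ≤ ·)] [Nonempty I]
    (e : I → A) (hpos : ∀ i, 0 ≤ e i) (hnorm : ∀ i, ‖e i‖ ≤ 1)
    (happrox : ∀ x : A, Tendsto (fun i => e i * x) atTop (nhds x))
    (a : A) (ha : 0 ≤ a) :
    φ a = ⨆ i, φ (CFC.sqrt a * e i * CFC.sqrt a) := by
  have hterm_nonneg (i : I) : 0 ≤ CFC.sqrt a * e i * CFC.sqrt a :=
    CFC.sqrt_mul_mul_sqrt_nonneg (hpos i) a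
  refine le_antisymm ?_ <| iSup_le fun i =>
    monotoneOn_of_map_add_of_nonneg hadd (hterm_nonneg i) ha
      (CFC.sqrt_mul_mul_sqrt_le_self ha (hpos i) (hnorm i))
  calc φ a ≤ liminf (fun i => φ (CFC.sqrt a * e i * CFC.sqrt a)) atTop :=
        hlsc _ a hterm_nonneg ha (CFC.tendsto_sqrt_mul_mul_sqrt happrox ha)
    _ ≤ limsup (fun i => φ (CFC.sqrt a * e i * CFC.sqrt a)) atTop := liminf_le_limsup
    _ ≤ ⨆ i, φ (CFC.sqrt a * e i * CFC.sqrt a) := limsup_le_iSup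

/-- Let `φ` be a lower semicontinuous weight on a C*-algebra `A`
(lower semicontinuity: for every net of positive elements converging in norm to a
positive element `a`, one has `φ a ≤ liminf φ (a_j)`).  If `(e i)_{i ∈ I}` is an
approximate identity of positive norm-at-most-one elements indexed by a directed
set `I`, then `φ a = ⨆ i, φ (a^{1/2} * e i * a^{1/2})` for every positive `a`. -/
theorem weight_eq_iSup_of_approximateIdentity
    {A : Type u} [CStarAlgebra A] [PartialOrder A] [StarOrderedRing A]
    (φ : A → ℝ≥0∞)
    (hadd : ∀ a b : A, 0 ≤ a → 0 ≤ b → φ (a + b) = φ a + φ b)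
    (hsmul : ∀ (r : ℝ) (a : A), 0 ≤ r → 0 ≤ a → φ (r • a) = ENNReal.ofReal r * φ a)
    (hlsc : ∀ {ι : Type u} [Preorder ι] [IsDirected ι (· ≤ ·)] [Nonempty ι]
      (s : ι → A) (a : A), (∀ j, 0 ≤ s j) → 0 ≤ a →
      Tendsto s atTop (nhds a) → φ a ≤ liminf (fun j => φ (s j)) atTop)
    {I : Type u} [Preorder I] [IsDirected I (· ≤ ·)] [Nonempty I]
    (e : I → A) (hpos : ∀ i, 0 ≤ e i) (hnorm : ∀ i, ‖e i‖ ≤ 1)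
    (happrox : ∀ x : A, Tendsto (fun i => e i * x) atTop (nhds x))
    (a : A) (ha : 0 ≤ a) :
    φ a = ⨆ i, φ (CFC.sqrt a * e i * CFC.sqrt a) :=
  weight_eq_iSup_of_approximateIdentity_general φ hadd hlsc e hpos hnorm happrox a ha
end

section
/- Let X and Y be locally compact Hausdorff spaces, let π : Y → X be a continuous open surjection, and let (α_x)_{x∈X} be a continuous π-system of measures. Then for every nonnegative function f ∈ C₀(Y), the function x ↦ ∫⁻ f dα_x (Lebesgue integral with values in [0,∞]) is lower semicontinuous on X. -/
open scoped ENNReal ZeroAtInfty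
open MeasureTheory Filter

/-! The truncations `(f - 1/(n+1))⁺` of `f` are continuous with compact support and increase
to `f`. By monotone convergence `∫⁻ f dα_x` is the supremum over `n` of their integrals, each of
which is continuous in `x` by the defining property of a continuous `π`-system, and a supremum
of continuous functions is lower semicontinuous. -/

lemma ZeroAtInftyContinuousMap.hasCompactSupport_max_sub_zero {Y : Type*} [TopologicalSpace Y]
    [R1Space Y] (f : C₀(Y, ℝ)) {ε : ℝ} (hε : 0 < ε) :
    HasCompactSupport fun y => max (f y - ε) 0 := by
  obtain ⟨K, hK, hKf⟩ := mem_cocompact.mp (zero_at_infty f (Iio_mem_nhds hε))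
  exact HasCompactSupport.intro hK fun y hy => max_eq_right (sub_nonpos.mpr (hKf hy).le)

lemma ENNReal.monotone_ofReal_sub_one_div (a : ℝ) :
    Monotone fun n : ℕ => ENNReal.ofReal (a - 1 / (n + 1)) := by
  intro m n hmn
  dsimp only
  gcongr ENNReal.ofReal (a - ?_)
  exact Nat.one_div_le_one_div hmn

lemma ENNReal.iSup_ofReal_sub_one_div (a : ℝ) :
    ⨆ n : ℕ, ENNReal.ofReal (a - 1 / (n + 1)) = ENNReal.ofReal a := by
  refine tendsto_nhds_unique (tendsto_atTop_iSup (ENNReal.monotone_ofReal_sub_one_div a)) ?_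
  have := (tendsto_const_nhds (x := a)).sub tendsto_one_div_add_atTop_nhds_zero_nat
  rw [sub_zero] at this
  exact (ENNReal.continuous_ofReal.tendsto a).comp this

lemma lintegral_ofReal_eq_iSup_lintegral_ofReal_sub_one_div {Y : Type*} [MeasurableSpace Y]
    (μ : Measure Y) {f : Y → ℝ} (hf : Measurable f) :
    ∫⁻ y, ENNReal.ofReal (f y) ∂μ = ⨆ n : ℕ, ∫⁻ y, ENNReal.ofReal (f y - 1 / (n + 1)) ∂μ := by
  simp_rw [← ENNReal.iSup_ofReal_sub_one_div (f _)]
  exact lintegral_iSup (fun n => (hf.sub_const _).ennreal_ofReal)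
    fun m n hmn y => ENNReal.monotone_ofReal_sub_one_div (f y) hmn

lemma continuous_lintegral_ofReal_of_continuous_integral {X Y : Type*} [TopologicalSpace X]
    [TopologicalSpace Y] [R1Space Y] [MeasurableSpace Y] [OpensMeasurableSpace Y]
    {α : X → Measure Y} [∀ x, IsFiniteMeasureOnCompacts (α x)] {g : Y → ℝ} (hg : Continuous g)
    (hgc : HasCompactSupport g) (hg0 : 0 ≤ g) (hcont : Continuous fun x => ∫ y, g y ∂α x) :
    Continuous fun x => ∫⁻ y, ENNReal.ofReal (g y) ∂α x := by
  have h (x : X) : ∫⁻ y, ENNReal.ofReal (g y) ∂α x = ENNReal.ofReal (∫ y, g y ∂α x) :=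
    (ofReal_integral_eq_lintegral_ofReal (hg.integrable_of_hasCompactSupport hgc)
      (.of_forall hg0)).symm
  simp_rw [h]
  exact ENNReal.continuous_ofReal.comp hcont

theorem lowerSemicontinuous_lintegral_of_continuous_pi_system_general
    {X Y : Type*} [TopologicalSpace X]
    [TopologicalSpace Y] [T2Space Y]
    [MeasurableSpace Y] [BorelSpace Y]
    (α : X → Measure Y)
    (hRadon : ∀ x, (α x).Regular)
    (hcont : ∀ f : Y → ℝ, Continuous f → HasCompactSupport f →
      Continuous fun x => ∫ y, f y ∂α x)
    (f : C₀(Y, ℝ)) :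
    LowerSemicontinuous fun x => ∫⁻ y, ENNReal.ofReal (f y) ∂α x := by
  have (x : X) := (hRadon x).toIsFiniteMeasureOnCompacts
  have hlsc (n : ℕ) :
      LowerSemicontinuous fun x => ∫⁻ y, ENNReal.ofReal (f y - 1 / (n + 1)) ∂α x := by
    have hg : Continuous fun y => max (f y - 1 / (n + 1)) 0 := by fun_prop
    have hgc := f.hasCompactSupport_max_sub_zero (ε := 1 / (n + 1)) Nat.one_div_pos_of_nat
    simpa only [ENNReal.ofReal_max, ENNReal.ofReal_zero, zero_le, max_eq_left] using
      (continuous_lintegral_ofReal_of_continuous_integral hg hgc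
        (fun _ => le_max_right _ _) (hcont _ hg hgc)).lowerSemicontinuous
  convert lowerSemicontinuous_iSup hlsc with x
  exact lintegral_ofReal_eq_iSup_lintegral_ofReal_sub_one_div _ f.continuous.measurable

/-- Let `π : Y → X` be a continuous open surjection between locally
compact Hausdorff spaces, and let `(α x)_{x ∈ X}` be a continuous `π`-system of
(Radon) measures: each `α x` is a regular Borel measure concentrated on the fibre
`π⁻¹(x)`, and `x ↦ ∫ f dα_x` is continuous for every continuous compactly supported
`f : Y → ℝ`.  Then for every nonnegative `f ∈ C₀(Y)` the function
`x ↦ ∫⁻ f dα_x` is lower semicontinuous on `X`. -/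
theorem lowerSemicontinuous_lintegral_of_continuous_pi_system
    {X Y : Type*} [TopologicalSpace X] [LocallyCompactSpace X] [T2Space X]
    [TopologicalSpace Y] [LocallyCompactSpace Y] [T2Space Y]
    [MeasurableSpace Y] [BorelSpace Y]
    (π : Y → X) (hπ : Continuous π) (hopen : IsOpenMap π) (hsurj : Function.Surjective π)
    (α : X → Measure Y)
    (hRadon : ∀ x, (α x).Regular)
    (hconc : ∀ x, α x (π ⁻¹' {x})ᶜ = 0)
    (hcont : ∀ f : Y → ℝ, Continuous f → HasCompactSupport f →
      Continuous fun x => ∫ y, f y ∂α x)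
    (f : C₀(Y, ℝ)) (hf : ∀ y, 0 ≤ f y) :
    LowerSemicontinuous fun x => ∫⁻ y, ENNReal.ofReal (f y) ∂α x :=
  lowerSemicontinuous_lintegral_of_continuous_pi_system_general α hRadon hcont f
end

section
/- Let X and Y be locally compact Hausdorff spaces, let π : Y → X be a continuous open surjection, and let (α_x)_{x∈X} be a continuous π-system of measures. For every nonnegative f ∈ C₀(Y) define Φ(f) : X → [0,∞] by Φ(f)(x) = ∫⁻ f dα_x. Then: (a) for every nonnegative f ∈ C₀(Y), Φ(f) is lower semicontinuous on X; (b) Φ(f+g) = Φ(f) + Φ(g) for all nonnegative f, g ∈ C₀(Y); (c) for every nonnegative h ∈ C₀(X) and nonnegative f ∈ C₀(Y), Φ((h∘π)·f) = h·Φ(f) pointwise on X; (d) for every nonnegative continuous compactly supported f on Y, Φ(f) is finite-valued and continuous on X; (e) if nonnegative functions f_n ∈ C₀(Y) converge uniformly to f ∈ C₀(Y), then Φ(f)(x) ≤ liminf_n Φ(f_n)(x) for every x ∈ X. -/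
/-!
Write `ε n = (n + 1)⁻¹`. For `f ∈ C₀(Y)` the truncations `(f - ε n)⁺` are continuous with
compact support, so their integrals against `α x` are finite and continuous in `x` (they are
real integrals of integrable functions), and by monotone convergence they increase to `Φ f`.
A supremum of continuous functions is lower semicontinuous, which gives (a); and if `fₘ → f`
uniformly then `f - ε n ≤ fₘ` for all large `m`, which gives (e). Parts (b) and (c) are
additivity of the Lebesgue integral and the fact that `h ∘ π = h x` holds `α x`-almost
everywhere.
-/

open scoped ENNReal ZeroAtInfty
open MeasureTheory Filter Topology

namespace ZeroAtInftyContinuousMap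

variable {Y : Type*} [TopologicalSpace Y]

theorem isCompact_setOf_le (f : C₀(Y, ℝ)) {ε : ℝ} (hε : 0 < ε) :
    IsCompact {y | ε ≤ f y} := by
  obtain ⟨K, hK, hsub⟩ := mem_cocompact'.1 (f.zero_at_infty' (Iio_mem_nhds hε))
  exact hK.of_isClosed_subset (isClosed_le continuous_const f.continuous) fun y hy =>
    hsub (not_lt.2 hy : ¬f y < ε)

theorem hasCompactSupport_max_sub_const (f : C₀(Y, ℝ)) {ε : ℝ} (hε : 0 < ε) :
    HasCompactSupport fun y => max (f y - ε) 0 :=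
  HasCompactSupport.intro' (f.isCompact_setOf_le hε)
    (isClosed_le continuous_const f.continuous) fun _ hy =>
      max_eq_right (sub_nonpos.2 (not_le.1 hy).le)

end ZeroAtInftyContinuousMap

theorem ENNReal.iSup_ofReal_sub_inv_succ (a : ℝ) :
    ⨆ n : ℕ, ENNReal.ofReal (a - ((n : ℝ) + 1)⁻¹) = ENNReal.ofReal a := by
  refine le_antisymm
    (iSup_le fun n => ENNReal.ofReal_le_ofReal (sub_le_self a (by positivity))) ?_
  have hlim : Tendsto (fun n : ℕ => a - ((n : ℝ) + 1)⁻¹) atTop (𝓝 a) := by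
    simpa using tendsto_const_nhds.sub (tendsto_one_div_add_atTop_nhds_zero_nat (𝕜 := ℝ))
  exact le_of_tendsto' ((ENNReal.continuous_ofReal.tendsto a).comp hlim) (le_iSup _)

namespace MeasureTheory

variable {Y : Type*} [MeasurableSpace Y]

theorem lintegral_ofReal_eq_iSup_lintegral_ofReal_sub_inv_succ {μ : Measure Y} {f : Y → ℝ}
    (hf : Measurable f) :
    ∫⁻ y, ENNReal.ofReal (f y) ∂μ =
      ⨆ n : ℕ, ∫⁻ y, ENNReal.ofReal (f y - ((n : ℝ) + 1)⁻¹) ∂μ := by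
  have hmono : Monotone fun (n : ℕ) y => ENNReal.ofReal (f y - ((n : ℝ) + 1)⁻¹) :=
    fun m n hmn y => ENNReal.ofReal_le_ofReal (by gcongr)
  rw [← lintegral_iSup (fun n => (hf.sub_const _).ennreal_ofReal) hmono]
  simp only [ENNReal.iSup_ofReal_sub_inv_succ]

theorem lintegral_ofReal_le_liminf_of_tendstoUniformly {ι : Type*} {l : Filter ι}
    {μ : Measure Y} {F : ι → Y → ℝ} {f : Y → ℝ} (hf : Measurable f)
    (hF : TendstoUniformly F f l) :
    ∫⁻ y, ENNReal.ofReal (f y) ∂μ ≤ liminf (fun i => ∫⁻ y, ENNReal.ofReal (F i y) ∂μ) l := by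
  rw [lintegral_ofReal_eq_iSup_lintegral_ofReal_sub_inv_succ hf]
  refine iSup_le fun n => le_liminf_of_le (by isBoundedDefault) ?_
  have hε : (0 : ℝ) < ((n : ℝ) + 1)⁻¹ := by positivity
  filter_upwards [Metric.tendstoUniformly_iff.1 hF _ hε] with i hi
  refine lintegral_mono fun y => ENNReal.ofReal_le_ofReal ?_
  have := (abs_sub_lt_iff.1 (hi y)).1
  linarith

theorem lintegral_ofReal_add {μ : Measure Y} {f g : Y → ℝ} (hf : Measurable f)
    (hf₀ : 0 ≤ f) (hg₀ : 0 ≤ g) :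
    ∫⁻ y, ENNReal.ofReal (f y + g y) ∂μ =
      ∫⁻ y, ENNReal.ofReal (f y) ∂μ + ∫⁻ y, ENNReal.ofReal (g y) ∂μ := by
  simp only [ENNReal.ofReal_add (hf₀ _) (hg₀ _)]
  exact lintegral_add_left hf.ennreal_ofReal _

theorem lintegral_ofReal_comp_mul_of_ae_eq {X : Type*} {μ : Measure Y} {π : Y → X} {x : X}
    (hμ : ∀ᵐ y ∂μ, π y = x) {h : X → ℝ} (hx : 0 ≤ h x) (f : Y → ℝ) :
    ∫⁻ y, ENNReal.ofReal (h (π y) * f y) ∂μ =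
      ENNReal.ofReal (h x) * ∫⁻ y, ENNReal.ofReal (f y) ∂μ := by
  rw [← lintegral_const_mul' _ _ ENNReal.ofReal_ne_top]
  refine lintegral_congr_ae ?_
  filter_upwards [hμ] with y hy
  rw [hy, ENNReal.ofReal_mul hx]

theorem lintegral_ofReal_eq_ofReal_integral_of_hasCompactSupport [TopologicalSpace Y]
    [OpensMeasurableSpace Y] {μ : Measure Y} [IsFiniteMeasureOnCompacts μ] {f : Y → ℝ}
    (hf : Continuous f) (hfc : HasCompactSupport f) (hf₀ : 0 ≤ f) :
    ∫⁻ y, ENNReal.ofReal (f y) ∂μ = ENNReal.ofReal (∫ y, f y ∂μ) :=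
  (ofReal_integral_eq_lintegral_ofReal (hf.integrable_of_hasCompactSupport hfc)
    (Eventually.of_forall hf₀)).symm

section ContinuousFamily

variable {X : Type*} [TopologicalSpace X] [TopologicalSpace Y] [OpensMeasurableSpace Y]
  {α : X → Measure Y} [∀ x, IsFiniteMeasureOnCompacts (α x)]

theorem continuous_lintegral_ofReal_of_hasCompactSupport {f : Y → ℝ} (hf : Continuous f)
    (hfc : HasCompactSupport f) (hf₀ : 0 ≤ f) (hα : Continuous fun x => ∫ y, f y ∂α x) :
    Continuous fun x => ∫⁻ y, ENNReal.ofReal (f y) ∂α x := by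
  simp only [lintegral_ofReal_eq_ofReal_integral_of_hasCompactSupport hf hfc hf₀]
  exact ENNReal.continuous_ofReal.comp hα

theorem lowerSemicontinuous_lintegral_ofReal
    (hα : ∀ f : Y → ℝ, Continuous f → HasCompactSupport f →
      Continuous fun x => ∫ y, f y ∂α x) (f : C₀(Y, ℝ)) :
    LowerSemicontinuous fun x => ∫⁻ y, ENNReal.ofReal (f y) ∂α x := by
  rw [funext fun x => lintegral_ofReal_eq_iSup_lintegral_ofReal_sub_inv_succ (μ := α x)
    (map_continuous f).measurable]
  refine lowerSemicontinuous_iSup fun n => ?_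
  -- `ofReal` already truncates at `0`, so the integrand is that of `(f - ε)⁺`.
  have htrunc : ∀ y, ENNReal.ofReal (f y - ((n : ℝ) + 1)⁻¹) =
      ENNReal.ofReal (max (f y - ((n : ℝ) + 1)⁻¹) 0) := fun y => by simp
  have hg : Continuous fun y => max (f y - ((n : ℝ) + 1)⁻¹) 0 := by fun_prop
  have hgc := f.hasCompactSupport_max_sub_const (by positivity : (0 : ℝ) < ((n : ℝ) + 1)⁻¹)
  simp only [htrunc]
  exact (continuous_lintegral_ofReal_of_hasCompactSupport hg hgc (fun y => le_max_right _ _)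
    (hα _ hg hgc)).lowerSemicontinuous

end ContinuousFamily

end MeasureTheory

theorem continuous_pi_system_weight_properties_general
    {X Y : Type*} [TopologicalSpace X] [TopologicalSpace Y] [MeasurableSpace Y] [BorelSpace Y]
    (π : Y → X) (α : X → Measure Y)
    (hRadon : ∀ x, (α x).Regular)
    (hconc : ∀ x, α x (π ⁻¹' {x})ᶜ = 0)
    (hcont : ∀ f : Y → ℝ, Continuous f → HasCompactSupport f →
      Continuous fun x => ∫ y, f y ∂α x) :
    -- (a)
    (∀ f : C₀(Y, ℝ), (∀ y, 0 ≤ f y) →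
      LowerSemicontinuous fun x => ∫⁻ y, ENNReal.ofReal (f y) ∂α x) ∧
    -- (b)
    (∀ f g : C₀(Y, ℝ), (∀ y, 0 ≤ f y) → (∀ y, 0 ≤ g y) → ∀ x,
      ∫⁻ y, ENNReal.ofReal ((f + g) y) ∂α x =
        (∫⁻ y, ENNReal.ofReal (f y) ∂α x) + ∫⁻ y, ENNReal.ofReal (g y) ∂α x) ∧
    -- (c)
    (∀ h : C₀(X, ℝ), (∀ x, 0 ≤ h x) → ∀ f : C₀(Y, ℝ), (∀ y, 0 ≤ f y) → ∀ x,
      ∫⁻ y, ENNReal.ofReal (h (π y) * f y) ∂α x =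
        ENNReal.ofReal (h x) * ∫⁻ y, ENNReal.ofReal (f y) ∂α x) ∧
    -- (d)
    (∀ f : Y → ℝ, Continuous f → HasCompactSupport f → (∀ y, 0 ≤ f y) →
      (∀ x, (∫⁻ y, ENNReal.ofReal (f y) ∂α x) ≠ ∞) ∧
        Continuous fun x => ∫⁻ y, ENNReal.ofReal (f y) ∂α x) ∧
    -- (e)
    (∀ (fn : ℕ → C₀(Y, ℝ)) (f : C₀(Y, ℝ)), (∀ n y, 0 ≤ fn n y) → (∀ y, 0 ≤ f y) →
      TendstoUniformly (fun n y => fn n y) (fun y => f y) atTop → ∀ x,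
      (∫⁻ y, ENNReal.ofReal (f y) ∂α x) ≤
        liminf (fun n => ∫⁻ y, ENNReal.ofReal (fn n y) ∂α x) atTop) := by
  have : ∀ x, IsFiniteMeasureOnCompacts (α x) := fun x => (hRadon x).toIsFiniteMeasureOnCompacts
  refine ⟨fun f _ => lowerSemicontinuous_lintegral_ofReal hcont f,
    fun f g hf hg x => lintegral_ofReal_add (map_continuous f).measurable hf hg,
    fun h hh f _ x => lintegral_ofReal_comp_mul_of_ae_eq (ae_iff.2 (hconc x)) (hh x) f,
    fun f hf hfc hf₀ => ⟨fun x => ?_,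
      continuous_lintegral_ofReal_of_hasCompactSupport hf hfc hf₀ (hcont f hf hfc)⟩,
    fun fn f _ _ hfn x =>
      lintegral_ofReal_le_liminf_of_tendstoUniformly (map_continuous f).measurable hfn⟩
  rw [lintegral_ofReal_eq_ofReal_integral_of_hasCompactSupport hf hfc hf₀]
  exact ENNReal.ofReal_ne_top

/-- Let `π : Y → X` be a continuous open surjection between locally
compact Hausdorff spaces, and let `(α x)_{x ∈ X}` be a continuous `π`-system of Radon
measures.  Define `Φ f x = ∫⁻ f dα_x` for nonnegative `f ∈ C₀(Y)`.  Then: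
(a) each `Φ f` is lower semicontinuous; (b) `Φ` is additive; (c) `Φ((h∘π)·f) = h·Φ f`
for nonnegative `h ∈ C₀(X)`; (d) `Φ f` is finite-valued and continuous for `f`
continuous nonnegative with compact support; (e) `Φ` is lower semicontinuous with
respect to uniform convergence. -/
theorem continuous_pi_system_weight_properties
    {X Y : Type*} [TopologicalSpace X] [LocallyCompactSpace X] [T2Space X]
    [TopologicalSpace Y] [LocallyCompactSpace Y] [T2Space Y]
    [MeasurableSpace Y] [BorelSpace Y]
    (π : Y → X) (hπ : Continuous π) (hopen : IsOpenMap π) (hsurj : Function.Surjective π)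
    (α : X → Measure Y)
    (hRadon : ∀ x, (α x).Regular)
    (hconc : ∀ x, α x (π ⁻¹' {x})ᶜ = 0)
    (hcont : ∀ f : Y → ℝ, Continuous f → HasCompactSupport f →
      Continuous fun x => ∫ y, f y ∂α x) :
    -- (a)
    (∀ f : C₀(Y, ℝ), (∀ y, 0 ≤ f y) →
      LowerSemicontinuous fun x => ∫⁻ y, ENNReal.ofReal (f y) ∂α x) ∧
    -- (b)
    (∀ f g : C₀(Y, ℝ), (∀ y, 0 ≤ f y) → (∀ y, 0 ≤ g y) → ∀ x,
      ∫⁻ y, ENNReal.ofReal ((f + g) y) ∂α x =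
        (∫⁻ y, ENNReal.ofReal (f y) ∂α x) + ∫⁻ y, ENNReal.ofReal (g y) ∂α x) ∧
    -- (c)
    (∀ h : C₀(X, ℝ), (∀ x, 0 ≤ h x) → ∀ f : C₀(Y, ℝ), (∀ y, 0 ≤ f y) → ∀ x,
      ∫⁻ y, ENNReal.ofReal (h (π y) * f y) ∂α x =
        ENNReal.ofReal (h x) * ∫⁻ y, ENNReal.ofReal (f y) ∂α x) ∧
    -- (d)
    (∀ f : Y → ℝ, Continuous f → HasCompactSupport f → (∀ y, 0 ≤ f y) →
      (∀ x, (∫⁻ y, ENNReal.ofReal (f y) ∂α x) ≠ ∞) ∧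
        Continuous fun x => ∫⁻ y, ENNReal.ofReal (f y) ∂α x) ∧
    -- (e)
    (∀ (fn : ℕ → C₀(Y, ℝ)) (f : C₀(Y, ℝ)), (∀ n y, 0 ≤ fn n y) → (∀ y, 0 ≤ f y) →
      TendstoUniformly (fun n y => fn n y) (fun y => f y) atTop → ∀ x,
      (∫⁻ y, ENNReal.ofReal (f y) ∂α x) ≤
        liminf (fun n => ∫⁻ y, ENNReal.ofReal (fn n y) ∂α x) atTop) :=
  continuous_pi_system_weight_properties_general π α hRadon hconc hcont
end

section
/- Let Y be a locally compact Hausdorff space and let φ be a map from the nonnegative elements of C₀(Y) to [0,∞] such that: (i) φ(f+g) = φ(f) + φ(g) for all nonnegative f, g ∈ C₀(Y); (ii) φ(λf) = λφ(f) for all real λ ≥ 0 (with 0·∞ = 0); (iii) φ is lower semicontinuous: whenever nonnegative functions f_n ∈ C₀(Y) converge uniformly to f ∈ C₀(Y), one has φ(f) ≤ liminf_n φ(f_n); (iv) φ is densely defined: the set {f ∈ C₀(Y) : f ≥ 0 and φ(f) < ∞} is dense in the set of nonnegative elements of C₀(Y) for the uniform norm. Then there exists a unique Radon measure μ on Y such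 that φ(f) = ∫⁻ f dμ for every nonnegative f ∈ C₀(Y). -/
open scoped ENNReal ZeroAtInfty NNReal CompactlySupported
open MeasureTheory Filter Topology

/-!
On nonnegative compactly supported functions `φ` is finite: such an `f` is dominated by a multiple
of any `g ≥ 1/2` on its support, and density provides such a `g` of finite weight. Hence `φ`
restricts to a positive linear functional on `C_c(Y, ℝ≥0)`, which the Riesz–Markov–Kakutani
theorem represents by a regular measure `μ`. A general nonnegative `f ∈ C₀(Y)` is the uniform and
monotone limit of its compactly supported truncations `(f - 1/(n+1))⁺`, so lower semicontinuity
of `φ` and monotone convergence give `φ f = ∫⁻ f dμ`. Uniqueness holds because a regular measure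
is determined by its integrals of compactly supported functions.
-/

namespace ZeroAtInftyContinuousMap

variable {α : Type*} [TopologicalSpace α]

lemma dist_apply_le_dist {β : Type*} [PseudoMetricSpace β] [Zero β] (f g : C₀(α, β)) (x : α) :
    dist (f x) (g x) ≤ dist f g :=
  dist_toBCF_eq_dist (f := f) (g := g) ▸
    BoundedContinuousFunction.dist_coe_le_dist (f := f.toBCF) (g := g.toBCF) x

lemma apply_le_norm (f : C₀(α, ℝ)) (x : α) : f x ≤ ‖f‖ :=
  norm_toBCF_eq_norm (f := f) ▸ f.toBCF.apply_le_norm x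

lemma isCompact_setOf_le_apply (f : C₀(α, ℝ)) {ε : ℝ} (hε : 0 < ε) : IsCompact {x | ε ≤ f x} := by
  obtain ⟨t, ht, hsub⟩ := mem_cocompact.mp (f.zero_at_infty' (Iio_mem_nhds hε))
  refine ht.of_isClosed_subset (isClosed_le continuous_const f.continuous) fun x hx => ?_
  by_contra hxt
  exact (hsub hxt : f x < ε).not_ge (show ε ≤ f x from hx)

noncomputable def truncation (f : C₀(α, ℝ)) (n : ℕ) : C_c(α, ℝ≥0) where
  toFun x := (f x - 1 / (n + 1)).toNNReal
  continuous_toFun := continuous_real_toNNReal.comp (f.continuous.sub continuous_const)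
  hasCompactSupport' := by
    refine .intro' (f.isCompact_setOf_le_apply (Nat.one_div_pos_of_nat (n := n)))
      (isClosed_le continuous_const f.continuous) fun x hx => ?_
    simpa using (lt_of_not_ge (show ¬ 1 / ((n : ℝ) + 1) ≤ f x from hx)).le

variable (f : C₀(α, ℝ))

lemma coe_truncation_apply (n : ℕ) (x : α) :
    (f.truncation n x : ℝ) = max (f x - 1 / (n + 1)) 0 :=
  Real.coe_toNNReal' _

lemma truncation_le {x : α} (hx : 0 ≤ f x) (n : ℕ) : (f.truncation n x : ℝ) ≤ f x := by
  rw [coe_truncation_apply]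
  exact max_le (sub_le_self _ Nat.one_div_pos_of_nat.le) hx

lemma monotone_truncation (x : α) : Monotone fun n => f.truncation n x := by
  intro m n hmn
  rw [← NNReal.coe_le_coe, coe_truncation_apply, coe_truncation_apply]
  gcongr

lemma tendstoUniformly_truncation (hf : ∀ x, 0 ≤ f x) :
    TendstoUniformly (fun n x => (f.truncation n x : ℝ)) f atTop := by
  rw [Metric.tendstoUniformly_iff]
  intro ε hε
  filter_upwards [tendsto_one_div_add_atTop_nhds_zero_nat.eventually (gt_mem_nhds hε)]
    with n hn x
  rw [Real.dist_eq, abs_of_nonneg (sub_nonneg.mpr (f.truncation_le (hf x) n)),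
    coe_truncation_apply]
  linarith [le_max_left (f x - 1 / (n + 1)) 0]

end ZeroAtInftyContinuousMap

namespace CompactlySupportedContinuousMap

variable {α : Type*} [TopologicalSpace α]

noncomputable def toZeroAtInftyReal (f : C_c(α, ℝ≥0)) : C₀(α, ℝ) := f.toReal

@[simp] lemma toZeroAtInftyReal_apply (f : C_c(α, ℝ≥0)) (x : α) :
    f.toZeroAtInftyReal x = f x := by
  simp [toZeroAtInftyReal]

lemma toZeroAtInftyReal_nonneg (f : C_c(α, ℝ≥0)) (x : α) : 0 ≤ f.toZeroAtInftyReal x := by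
  simp

lemma toZeroAtInftyReal_add (f g : C_c(α, ℝ≥0)) :
    (f + g).toZeroAtInftyReal = f.toZeroAtInftyReal + g.toZeroAtInftyReal := by
  ext; simp

lemma toZeroAtInftyReal_smul (c : ℝ≥0) (f : C_c(α, ℝ≥0)) :
    (c • f).toZeroAtInftyReal = (c : ℝ) • f.toZeroAtInftyReal := by
  ext; simp

lemma hasCompactSupport_toZeroAtInftyReal (f : C_c(α, ℝ≥0)) :
    HasCompactSupport f.toZeroAtInftyReal :=
  f.toReal.hasCompactSupport

end CompactlySupportedContinuousMap

section Weight

open CompactlySupportedContinuousMap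

variable {Y : Type*} [TopologicalSpace Y] {φ : C₀(Y, ℝ) → ℝ≥0∞}

lemma weight_mono
    (hadd : ∀ f g : C₀(Y, ℝ), (∀ y, 0 ≤ f y) → (∀ y, 0 ≤ g y) → φ (f + g) = φ f + φ g)
    {f g : C₀(Y, ℝ)} (hf : ∀ y, 0 ≤ f y) (hfg : ∀ y, f y ≤ g y) : φ f ≤ φ g := by
  have hgf : ∀ y, 0 ≤ (g - f) y := fun y => sub_nonneg.mpr (hfg y)
  calc φ f ≤ φ f + φ (g - f) := le_self_add
    _ = φ g := by rw [← hadd f (g - f) hf hgf, add_sub_cancel]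

variable [T2Space Y] [LocallyCompactSpace Y]

lemma weight_lt_top_of_hasCompactSupport
    (hadd : ∀ f g : C₀(Y, ℝ), (∀ y, 0 ≤ f y) → (∀ y, 0 ≤ g y) → φ (f + g) = φ f + φ g)
    (hsmul : ∀ (r : ℝ) (f : C₀(Y, ℝ)), 0 ≤ r → (∀ y, 0 ≤ f y) →
      φ (r • f) = ENNReal.ofReal r * φ f)
    (hdense : ∀ f : C₀(Y, ℝ), (∀ y, 0 ≤ f y) →
      f ∈ closure {g : C₀(Y, ℝ) | (∀ y, 0 ≤ g y) ∧ φ g < ∞})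
    {f : C₀(Y, ℝ)} (hf : ∀ y, 0 ≤ f y) (hfc : HasCompactSupport f) : φ f < ∞ := by
  obtain ⟨χ, hχ1, -, hχc, hχ01⟩ :=
    exists_continuous_one_zero_of_isCompact hfc isClosed_empty (Set.disjoint_empty _)
  let χ₀ : C₀(Y, ℝ) := (⟨χ, hχc⟩ : C_c(Y, ℝ))
  obtain ⟨g, ⟨hg0, hgφ⟩, hχg⟩ :=
    Metric.mem_closure_iff.mp (hdense χ₀ fun y => (hχ01 y).1) (1 / 2) one_half_pos
  have hfg : ∀ y, f y ≤ (2 * ‖f‖) • g y := fun y => by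
    by_cases hy : y ∈ tsupport f
    · have hdist := (χ₀.dist_apply_le_dist g y).trans_lt hχg
      rw [Real.dist_eq, show χ₀ y = 1 from hχ1 hy] at hdist
      have hgy : 1 / 2 < g y := by linarith [(abs_lt.mp hdist).2]
      rw [smul_eq_mul]
      nlinarith [f.apply_le_norm y, norm_nonneg f]
    · rw [image_eq_zero_of_notMem_tsupport hy, smul_eq_mul]
      exact mul_nonneg (mul_nonneg zero_le_two (norm_nonneg f)) (hg0 y)
  calc φ f ≤ φ ((2 * ‖f‖) • g) := weight_mono hadd hf hfg
    _ = ENNReal.ofReal (2 * ‖f‖) * φ g := hsmul _ g (by positivity) hg0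
    _ < ∞ := ENNReal.mul_lt_top ENNReal.ofReal_lt_top hgφ

variable
  (hadd : ∀ f g : C₀(Y, ℝ), (∀ y, 0 ≤ f y) → (∀ y, 0 ≤ g y) → φ (f + g) = φ f + φ g)
  (hsmul : ∀ (r : ℝ) (f : C₀(Y, ℝ)), 0 ≤ r → (∀ y, 0 ≤ f y) →
    φ (r • f) = ENNReal.ofReal r * φ f)
  (hdense : ∀ f : C₀(Y, ℝ), (∀ y, 0 ≤ f y) →
    f ∈ closure {g : C₀(Y, ℝ) | (∀ y, 0 ≤ g y) ∧ φ g < ∞})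

variable (φ) in
noncomputable def weightLinearMap : C_c(Y, ℝ≥0) →ₗ[ℝ≥0] ℝ≥0 where
  toFun f := (φ f.toZeroAtInftyReal).toNNReal
  map_add' f g := by
    have hfin (f : C_c(Y, ℝ≥0)) : φ f.toZeroAtInftyReal ≠ ∞ :=
      (weight_lt_top_of_hasCompactSupport hadd hsmul hdense f.toZeroAtInftyReal_nonneg
        f.hasCompactSupport_toZeroAtInftyReal).ne
    rw [toZeroAtInftyReal_add, hadd _ _ f.toZeroAtInftyReal_nonneg g.toZeroAtInftyReal_nonneg,
      ENNReal.toNNReal_add (hfin f) (hfin g)]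
  map_smul' c f := by
    rw [toZeroAtInftyReal_smul, hsmul _ _ c.coe_nonneg f.toZeroAtInftyReal_nonneg]
    simp

lemma coe_weightLinearMap (f : C_c(Y, ℝ≥0)) :
    (weightLinearMap φ hadd hsmul hdense f : ℝ≥0∞) = φ f.toZeroAtInftyReal :=
  ENNReal.coe_toNNReal (weight_lt_top_of_hasCompactSupport hadd hsmul hdense
    f.toZeroAtInftyReal_nonneg f.hasCompactSupport_toZeroAtInftyReal).ne

end Weight

theorem MeasureTheory.Measure.ext_of_lintegral_eq_on_compactlySupported_nnreal {X : Type*}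
    [TopologicalSpace X] [T2Space X] [LocallyCompactSpace X] [MeasurableSpace X] [BorelSpace X]
    {μ ν : Measure X} [μ.Regular] [ν.Regular]
    (h : ∀ f : C_c(X, ℝ≥0), ∫⁻ x, f x ∂μ = ∫⁻ x, f x ∂ν) : μ = ν :=
  Measure.ext_of_integral_eq_on_compactlySupported_nnreal fun f => by
    simp only [integral_eq_lintegral_of_nonneg_ae (ae_of_all _ fun x => (f x).coe_nonneg)
      (by fun_prop : Continuous fun x => (f x : ℝ)).aestronglyMeasurable,
      ENNReal.ofReal_coe_nnreal, h]

lemma weight_eq_lintegral_of_forall_compactlySupported {Y : Type*} [TopologicalSpace Y]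
    [MeasurableSpace Y] [OpensMeasurableSpace Y] {φ : C₀(Y, ℝ) → ℝ≥0∞}
    (hadd : ∀ f g : C₀(Y, ℝ), (∀ y, 0 ≤ f y) → (∀ y, 0 ≤ g y) → φ (f + g) = φ f + φ g)
    (hlsc : ∀ (fn : ℕ → C₀(Y, ℝ)) (f : C₀(Y, ℝ)), (∀ n y, 0 ≤ fn n y) →
      (∀ y, 0 ≤ f y) → TendstoUniformly (fun n y => fn n y) (fun y => f y) atTop →
      φ f ≤ liminf (fun n => φ (fn n)) atTop)
    {μ : Measure Y} (hμ : ∀ g : C_c(Y, ℝ≥0), φ g.toZeroAtInftyReal = ∫⁻ y, g y ∂μ)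
    {f : C₀(Y, ℝ)} (hf : ∀ y, 0 ≤ f y) : φ f = ∫⁻ y, ENNReal.ofReal (f y) ∂μ := by
  let fn n := (f.truncation n).toZeroAtInftyReal
  have hfn0 : ∀ n y, 0 ≤ fn n y := fun n => (f.truncation n).toZeroAtInftyReal_nonneg
  have hunif : TendstoUniformly (fun n y => fn n y) f atTop := by
    simpa [fn] using f.tendstoUniformly_truncation hf
  have hlim : Tendsto (fun n => φ (fn n)) atTop (𝓝 (∫⁻ y, ENNReal.ofReal (f y) ∂μ)) := by
    simp only [fn, hμ]
    refine lintegral_tendsto_of_tendsto_of_monotone (fun n => by fun_prop)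
      (ae_of_all _ fun y _ _ hmn => ENNReal.coe_le_coe.mpr (f.monotone_truncation y hmn))
      (ae_of_all _ fun y => ?_)
    simpa [fn, Function.comp_def] using
      (ENNReal.continuous_ofReal.tendsto _).comp (hunif.tendsto_at y)
  refine le_antisymm ((hlsc fn f hfn0 hf hunif).trans_eq hlim.liminf_eq) ?_
  exact le_of_tendsto' hlim fun n =>
    weight_mono hadd (hfn0 n) fun y => by simpa [fn] using f.truncation_le (hf y) n

/-- Let `Y` be a locally compact Hausdorff space and let `φ` be a
densely defined, lower semicontinuous weight on `C₀(Y)` (an `[0,∞]`-valued map on the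
nonnegative cone, additive and positively homogeneous).  Then there is a unique Radon
measure `μ` on `Y` with `φ f = ∫⁻ f dμ` for every nonnegative `f ∈ C₀(Y)`. -/
theorem exists_unique_radon_measure_of_weight
    {Y : Type*} [TopologicalSpace Y] [LocallyCompactSpace Y] [T2Space Y]
    [MeasurableSpace Y] [BorelSpace Y]
    (φ : C₀(Y, ℝ) → ℝ≥0∞)
    -- (i) additivity
    (hadd : ∀ f g : C₀(Y, ℝ), (∀ y, 0 ≤ f y) → (∀ y, 0 ≤ g y) →
      φ (f + g) = φ f + φ g)
    -- (ii) positive homogeneity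
    (hsmul : ∀ (r : ℝ) (f : C₀(Y, ℝ)), 0 ≤ r → (∀ y, 0 ≤ f y) →
      φ (r • f) = ENNReal.ofReal r * φ f)
    -- (iii) lower semicontinuity w.r.t. uniform convergence
    (hlsc : ∀ (fn : ℕ → C₀(Y, ℝ)) (f : C₀(Y, ℝ)), (∀ n y, 0 ≤ fn n y) →
      (∀ y, 0 ≤ f y) → TendstoUniformly (fun n y => fn n y) (fun y => f y) atTop →
      φ f ≤ liminf (fun n => φ (fn n)) atTop)
    -- (iv) densely defined
    (hdense : ∀ f : C₀(Y, ℝ), (∀ y, 0 ≤ f y) →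
      f ∈ closure {g : C₀(Y, ℝ) | (∀ y, 0 ≤ g y) ∧ φ g < ∞}) :
    ∃! μ : Measure Y, μ.Regular ∧
      ∀ f : C₀(Y, ℝ), (∀ y, 0 ≤ f y) → φ f = ∫⁻ y, ENNReal.ofReal (f y) ∂μ := by
  let μ := NNRealRMK.rieszMeasure (weightLinearMap φ hadd hsmul hdense)
  have hμ (g : C_c(Y, ℝ≥0)) : φ g.toZeroAtInftyReal = ∫⁻ y, g y ∂μ := by
    rw [NNRealRMK.lintegral_rieszMeasure, coe_weightLinearMap]
  refine ⟨μ, ⟨inferInstance, fun f hf =>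
    weight_eq_lintegral_of_forall_compactlySupported hadd hlsc hμ hf⟩, ?_⟩
  rintro ν ⟨hν, hνφ⟩
  refine Measure.ext_of_lintegral_eq_on_compactlySupported_nnreal fun g => ?_
  simpa [← hμ] using (hνφ _ g.toZeroAtInftyReal_nonneg).symm
end
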